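/- Let U ∈ U(2d,ℂ) be a unitary matrix. Then the following are equivalent: (i) there exist W ∈ O(2d,ℝ) and Δ ∈ U(d,ℂ) such that U = W · diag(Δ, conj(Δ)), where conj(Δ) is the entrywise complex conjugate of Δ; (ii) there exist W ∈ O(2d,ℝ) and Δ₁, Δ₂ ∈ U(d,ℂ) such that Δ₁Δ₂ᵀ is a real matrix and U = W · diag(Δ₁, Δ₂); (iii) there exists Δ ∈ U(d,ℂ) such that UᵀU = diag(Δ, conj(Δ)). -/

import Mathlib

/-!
A real orthogonal left factor is invisible to `Uᵀ U`, since `(W B)ᵀ (W B) = Bᵀ B`. So (i) gives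
`Uᵀ U = diag(Δᵀ Δ, conj (Δᵀ Δ))`, and so does (ii): there `R = Δ₁ Δ₂ᵀ` is real and unitary,
hence `R Rᵀ = 1`, and `Δ₂ᵀ = Δ₁⋆ R` turns `Δ₂ᵀ Δ₂` into `conj (Δ₁ᵀ Δ₁)`.

Conversely, unitaries `U`, `B` with `Uᵀ U = Bᵀ B` differ by a real orthogonal factor, because
`conj U = (Uᵀ)⁻¹` makes `conj (U B⋆) = conj U · Bᵀ` equal to `U B⋆`. Under (iii) the block `Δ`
is a symmetric unitary, so it has a Takagi factorisation `Δ = Vᵀ V` with `V` unitary, and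
`B = diag(V, conj V)` has `Bᵀ B = Uᵀ U`.

For the Takagi factorisation, rotate `Δ` by a unit scalar so that `-1` is not an eigenvalue.
Its Cayley transform `T = i (1 - Δ) (1 + Δ)⁻¹` is then Hermitian and symmetric, hence real
symmetric, and is diagonalised by a real orthogonal `Q`; as `Δ (1 - i T) = 1 + i T`, also
`Δ = Q D Qᵀ` with `D` diagonal unitary, and `V = √D Qᵀ`.
-/

open Matrix

lemma Complex.exists_mem_unitary_mul_self_eq {z : ℂ} (hz : z ∈ unitary ℂ) :
    ∃ s ∈ unitary ℂ, s * s = z := by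
  obtain ⟨s, hs⟩ := IsAlgClosed.exists_pow_nat_eq z two_pos
  refine ⟨s, ?_, by rw [← sq, hs]⟩
  have hnorm : ‖s‖ ^ 2 = 1 := by rw [← norm_pow, hs, CStarRing.norm_of_mem_unitary hz]
  rw [Unitary.mem_iff_star_mul_self, Complex.star_def, Complex.conj_mul']
  exact_mod_cast hnorm

namespace Matrix

variable {l m n : Type*}

lemma map_ofReal_mul [Fintype m] (A : Matrix l m ℝ) (B : Matrix m n ℝ) :
    (A * B).map (fun x : ℝ => (x : ℂ)) =
      A.map (fun x : ℝ => (x : ℂ)) * B.map (fun x : ℝ => (x : ℂ)) :=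
  Matrix.map_mul (f := Complex.ofRealHom)

lemma map_ofReal_one [DecidableEq n] : (1 : Matrix n n ℝ).map (fun x : ℝ => (x : ℂ)) = 1 :=
  Matrix.map_one _ Complex.ofReal_zero Complex.ofReal_one

lemma map_ofReal_mem_unitaryGroup_iff [Fintype n] [DecidableEq n] {W : Matrix n n ℝ} :
    W.map (fun x : ℝ => (x : ℂ)) ∈ unitaryGroup n ℂ ↔ W ∈ orthogonalGroup n ℝ := by
  rw [mem_unitaryGroup_iff', mem_orthogonalGroup_iff', star_eq_conjTranspose,
    ← conjTranspose_map _ (fun x => (Complex.conj_ofReal x).symm),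
    conjTranspose_eq_transpose_of_trivial, ← map_ofReal_mul, ← map_ofReal_one]
  exact (map_injective Complex.ofReal_injective).eq_iff

lemma exists_map_ofReal_eq_of_map_conj_eq {A : Matrix m n ℂ} (h : A.map (starRingEnd ℂ) = A) :
    ∃ W : Matrix m n ℝ, W.map (fun x : ℝ => (x : ℂ)) = A :=
  ⟨A.map Complex.re, ext fun i j => Complex.conj_eq_iff_re.mp congr($h i j)⟩

lemma transpose_mul_self_map_ofReal_mul [Fintype n] [DecidableEq n] {W : Matrix n n ℝ}
    (hW : W ∈ orthogonalGroup n ℝ) (B : Matrix n m ℂ) :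
    (W.map (fun x : ℝ => (x : ℂ)) * B)ᵀ * (W.map (fun x : ℝ => (x : ℂ)) * B) = Bᵀ * B := by
  rw [transpose_mul, Matrix.mul_assoc, ← Matrix.mul_assoc _ _ B, ← transpose_map,
    ← map_ofReal_mul, (mem_orthogonalGroup_iff' n ℝ).mp hW, map_ofReal_one, Matrix.one_mul]

lemma map_star_mul_transpose_of_mem_unitaryGroup [Fintype n] [DecidableEq n] {U : Matrix n n ℂ}
    (hU : U ∈ unitaryGroup n ℂ) : U.map star * Uᵀ = 1 := by
  rw [← conjTranspose_transpose, ← transpose_mul, ← star_eq_conjTranspose,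
    mem_unitaryGroup_iff.mp hU, transpose_one]

lemma exists_orthogonal_mul_of_transpose_mul_self_eq [Fintype n] [DecidableEq n]
    {U B : Matrix n n ℂ} (hU : U ∈ unitaryGroup n ℂ) (hB : B ∈ unitaryGroup n ℂ)
    (h : Uᵀ * U = Bᵀ * B) :
    ∃ W ∈ orthogonalGroup n ℝ, U = W.map (fun x : ℝ => (x : ℂ)) * B := by
  have hreal : (U * star B).map (starRingEnd ℂ) = U * star B := calc
    (U * star B).map (starRingEnd ℂ) = U.map star * Bᵀ := by
      rw [Matrix.map_mul]; congr 1; ext; simp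
    _ = U.map star * (Bᵀ * B) * star B := by
      rw [Matrix.mul_assoc, Matrix.mul_assoc, mem_unitaryGroup_iff.mp hB, Matrix.mul_one]
    _ = U * star B := by
      rw [← h, ← Matrix.mul_assoc,
        map_star_mul_transpose_of_mem_unitaryGroup hU, Matrix.one_mul]
  obtain ⟨W, hW⟩ := exists_map_ofReal_eq_of_map_conj_eq hreal
  refine ⟨W, map_ofReal_mem_unitaryGroup_iff.mp ?_, ?_⟩
  · rw [hW]; exact mul_mem hU (Unitary.star_mem hB)
  · rw [hW, Matrix.mul_assoc, mem_unitaryGroup_iff'.mp hB, Matrix.mul_one]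

lemma isHermitian_of_map_ofReal {S : Matrix n n ℝ}
    (h : (S.map (fun x : ℝ => (x : ℂ))).IsHermitian) : S.IsHermitian := by
  refine map_injective Complex.ofReal_injective ?_
  dsimp only
  rw [conjTranspose_map _ (fun x => (Complex.conj_ofReal x).symm)]
  exact h

lemma exists_isHermitian_mul_one_sub_eq_one_add [Fintype n] [DecidableEq n] {Δ : Matrix n n ℂ}
    (hΔ : Δ ∈ unitaryGroup n ℂ) (hsymm : Δᵀ = Δ) (hunit : IsUnit (1 + Δ)) :
    ∃ S : Matrix n n ℝ, S.IsHermitian ∧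
      Δ * (1 - Complex.I • S.map (fun x : ℝ => (x : ℂ))) =
        1 + Complex.I • S.map (fun x : ℝ => (x : ℂ)) := by
  set N := (1 + Δ)⁻¹
  have hdet := (isUnit_iff_isUnit_det _).mp hunit
  have hΔN : Δ * N = 1 - N := by
    have h := mul_nonsing_inv (1 + Δ) hdet
    rw [add_mul, one_mul] at h
    exact eq_sub_of_add_eq' h
  have hNt : Nᵀ = N := by rw [transpose_nonsing_inv, transpose_add, transpose_one, hsymm]
  have hNstar : star N = Δ * N := by
    refine left_inv_eq_right_inv (a := 1 + star Δ) ?_ ?_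
    · rw [← star_one, ← star_add, ← star_mul, mul_nonsing_inv _ hdet, star_one]
    · rw [← Matrix.mul_assoc, add_mul, mem_unitaryGroup_iff'.mp hΔ, one_mul, add_comm,
        mul_nonsing_inv _ hdet]
  -- the Cayley transform `i (1 - Δ) (1 + Δ)⁻¹`
  set T := Complex.I • (2 • N - 1)
  have hT : T.IsHermitian := by
    rw [IsHermitian, ← star_eq_conjTranspose]
    simp only [T, star_smul, star_sub, star_one, star_trivial, hNstar, hΔN, Complex.star_def,
      Complex.conj_I]
    module
  have hreal : T.map (starRingEnd ℂ) = T := by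
    change Tᴴᵀ = T
    rw [hT.eq, transpose_smul, transpose_sub, transpose_smul, hNt, transpose_one]
  obtain ⟨S, hS⟩ := exists_map_ofReal_eq_of_map_conj_eq hreal
  refine ⟨S, isHermitian_of_map_ofReal (hS ▸ hT), ?_⟩
  rw [hS]
  calc Δ * (1 - Complex.I • T) = 2 • (Δ * N) := by
        rw [← Matrix.mul_smul]; congr 1; simp only [T, smul_smul, Complex.I_mul_I]; module
    _ = 1 + Complex.I • T := by
        rw [hΔN]; simp only [T, smul_smul, Complex.I_mul_I]; module

lemma diagonal_mem_unitaryGroup_iff [Fintype n] [DecidableEq n] {α : Type*} [CommRing α]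
    [StarRing α] {d : n → α} : diagonal d ∈ unitaryGroup n α ↔ ∀ i, d i ∈ unitary α := by
  simp only [mem_unitaryGroup_iff', star_eq_conjTranspose, diagonal_conjTranspose,
    diagonal_mul_diagonal, ← diagonal_one, diagonal_eq_diagonal_iff, Pi.star_apply,
    Unitary.mem_iff_star_mul_self]

lemma mul_diagonal_mul_transpose_mul_mul_diagonal_mul_transpose [Fintype n] [DecidableEq n]
    {α : Type*} [CommSemiring α] {Q : Matrix n n α} (hQ : Qᵀ * Q = 1) (a b : n → α) :
    Q * diagonal a * Qᵀ * (Q * diagonal b * Qᵀ) = Q * diagonal (a * b) * Qᵀ := by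
  calc Q * diagonal a * Qᵀ * (Q * diagonal b * Qᵀ)
        = Q * (diagonal a * (Qᵀ * Q) * diagonal b) * Qᵀ := by simp only [Matrix.mul_assoc]
    _ = Q * diagonal (a * b) * Qᵀ := by rw [hQ, Matrix.mul_one, diagonal_mul_diagonal']; rfl

lemma one_add_smul_mul_diagonal_mul_transpose [Fintype n] [DecidableEq n] {α : Type*}
    [CommRing α] {Q : Matrix n n α} (hQ : Q * Qᵀ = 1) (c : α) (d : n → α) :
    1 + c • (Q * diagonal d * Qᵀ) = Q * diagonal (fun k => 1 + c * d k) * Qᵀ := by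
  calc 1 + c • (Q * diagonal d * Qᵀ) = Q * (1 + c • diagonal d) * Qᵀ := by
        rw [Matrix.mul_add, Matrix.add_mul, Matrix.mul_one, hQ, Matrix.mul_smul, Matrix.smul_mul]
    _ = Q * diagonal (fun k => 1 + c * d k) * Qᵀ := by
        rw [← diagonal_one, ← diagonal_smul, ← diagonal_add]; rfl

lemma IsHermitian.map_ofReal_eq_mul_diagonal_mul_transpose [Fintype n] [DecidableEq n]
    {S : Matrix n n ℝ} (hS : S.IsHermitian) :
    S.map (fun x : ℝ => (x : ℂ)) =
      (hS.eigenvectorUnitary : Matrix n n ℝ).map (fun x : ℝ => (x : ℂ)) *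
        diagonal (fun k => (hS.eigenvalues k : ℂ)) *
        ((hS.eigenvectorUnitary : Matrix n n ℝ).map (fun x : ℝ => (x : ℂ)))ᵀ := by
  conv_lhs => rw [hS.spectral_theorem]
  rw [Unitary.conjStarAlgAut_apply, star_eq_conjTranspose, conjTranspose_eq_transpose_of_trivial,
    map_ofReal_mul, map_ofReal_mul, diagonal_map Complex.ofReal_zero, transpose_map]
  rfl

lemma exists_diagonal_of_mul_one_sub_eq_one_add [Fintype n] [DecidableEq n] {Δ : Matrix n n ℂ}
    {S : Matrix n n ℝ} (hS : S.IsHermitian)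
    (h : Δ * (1 - Complex.I • S.map (fun x : ℝ => (x : ℂ))) =
      1 + Complex.I • S.map (fun x : ℝ => (x : ℂ))) :
    ∃ Q ∈ unitaryGroup n ℂ, ∃ D : n → ℂ, diagonal D ∈ unitaryGroup n ℂ ∧
      Δ = Q * diagonal D * Qᵀ := by
  set Q := (hS.eigenvectorUnitary : Matrix n n ℝ).map (fun x : ℝ => (x : ℂ))
  have hQ : Qᵀ * Q = 1 := by
    rw [← transpose_map, ← map_ofReal_mul,
      (mem_orthogonalGroup_iff' n ℝ).mp hS.eigenvectorUnitary.2, map_ofReal_one]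
  have hQ' : Q * Qᵀ = 1 := by
    rw [← transpose_map, ← map_ofReal_mul,
      (mem_orthogonalGroup_iff n ℝ).mp hS.eigenvectorUnitary.2, map_ofReal_one]
  set ev := hS.eigenvalues
  have hspec (c : ℂ) : 1 + c • S.map (fun x : ℝ => (x : ℂ)) =
      Q * diagonal (fun k => 1 + c * ev k) * Qᵀ := by
    rw [hS.map_ofReal_eq_mul_diagonal_mul_transpose, one_add_smul_mul_diagonal_mul_transpose hQ']
  set a : n → ℂ := fun k => 1 + -Complex.I * ev k
  set b : n → ℂ := fun k => 1 + Complex.I * ev k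
  have ha : ∀ k, a k ≠ 0 := fun k h => by simpa [a] using congrArg Complex.re h
  have hb : ∀ k, b k ≠ 0 := fun k h => by simpa [b] using congrArg Complex.re h
  refine ⟨Q, map_ofReal_mem_unitaryGroup_iff.mpr hS.eigenvectorUnitary.2, b * a⁻¹,
    diagonal_mem_unitaryGroup_iff.mpr fun k => Unitary.mem_iff_star_mul_self.mpr ?_, ?_⟩
  · have hstar : star (b k) = a k := by simp [a, b, Complex.conj_ofReal]
    rw [Pi.mul_apply, Pi.inv_apply, star_mul', star_inv₀, hstar, ← hstar, star_star]
    field_simp [ha k, hb k]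
  · have hinv : Q * diagonal a * Qᵀ * (Q * diagonal a⁻¹ * Qᵀ) = 1 := by
      have : a * a⁻¹ = fun _ => 1 := funext fun k => mul_inv_cancel₀ (ha k)
      rw [mul_diagonal_mul_transpose_mul_mul_diagonal_mul_transpose hQ, this, diagonal_one,
        Matrix.mul_one, hQ']
    calc Δ = Δ * (Q * diagonal a * Qᵀ) * (Q * diagonal a⁻¹ * Qᵀ) := by
          rw [Matrix.mul_assoc, hinv, Matrix.mul_one]
      _ = Q * diagonal b * Qᵀ * (Q * diagonal a⁻¹ * Qᵀ) := by
          rw [← hspec, ← hspec, neg_smul, ← sub_eq_add_neg, h]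
      _ = Q * diagonal (b * a⁻¹) * Qᵀ :=
          mul_diagonal_mul_transpose_mul_mul_diagonal_mul_transpose hQ _ _

lemma exists_mem_unitary_isUnit_one_add_smul [Fintype n] [DecidableEq n] (A : Matrix n n ℂ) :
    ∃ c ∈ unitary ℂ, IsUnit (1 + c • A) := by
  have hsphere : (Metric.sphere (0 : ℂ) 1).Infinite :=
    (isPreconnected_sphere (by simp) 0 1).infinite_of_nontrivial
      ⟨1, by simp, -1, by simp, by norm_num⟩
  obtain ⟨w, hw, hwσ⟩ := (hsphere.sdiff (-A).finite_spectrum).nonempty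
  have hw0 : w ≠ 0 := ne_zero_of_mem_sphere one_ne_zero ⟨w, hw⟩
  refine ⟨w⁻¹, Unitary.mem_iff_star_mul_self.mpr ?_, ?_⟩
  · rw [star_inv₀, ← mul_inv, Complex.star_def, Complex.conj_mul',
      mem_sphere_zero_iff_norm.mp hw]
    norm_num
  · have hsplit : 1 + w⁻¹ • A = algebraMap ℂ (Matrix n n ℂ) w⁻¹ * (algebraMap ℂ _ w - -A) := by
      rw [Algebra.smul_def, sub_neg_eq_add, mul_add, ← map_mul, inv_mul_cancel₀ hw0, map_one]
    rw [hsplit]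
    exact ((isUnit_iff_ne_zero.mpr (inv_ne_zero hw0)).map _).mul (spectrum.notMem_iff.mp hwσ)

lemma exists_mul_diagonal_mul_transpose_of_transpose_eq [Fintype n] [DecidableEq n]
    {Δ : Matrix n n ℂ} (hΔ : Δ ∈ unitaryGroup n ℂ) (hsymm : Δᵀ = Δ) :
    ∃ Q ∈ unitaryGroup n ℂ, ∃ D : n → ℂ, diagonal D ∈ unitaryGroup n ℂ ∧
      Δ = Q * diagonal D * Qᵀ := by
  obtain ⟨c, hc, hunit⟩ := exists_mem_unitary_isUnit_one_add_smul Δ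
  obtain ⟨S, hS, hcayley⟩ := exists_isHermitian_mul_one_sub_eq_one_add
    (Unitary.smul_mem_of_mem hc hΔ) (by rw [transpose_smul, hsymm]) hunit
  obtain ⟨Q, hQ, D, hD, hcΔ⟩ := exists_diagonal_of_mul_one_sub_eq_one_add hS hcayley
  refine ⟨Q, hQ, star c • D, ?_, ?_⟩
  · rw [diagonal_smul]
    exact Unitary.smul_mem_of_mem (Unitary.star_mem hc) hD
  · rw [diagonal_smul, Matrix.mul_smul, Matrix.smul_mul, ← hcΔ, smul_smul,
      Unitary.star_mul_self_of_mem hc, one_smul]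

lemma exists_mem_unitaryGroup_transpose_mul_self_eq [Fintype n] [DecidableEq n]
    {Δ : Matrix n n ℂ} (hΔ : Δ ∈ unitaryGroup n ℂ) (hsymm : Δᵀ = Δ) :
    ∃ V ∈ unitaryGroup n ℂ, Vᵀ * V = Δ := by
  obtain ⟨Q, hQ, D, hD, rfl⟩ := exists_mul_diagonal_mul_transpose_of_transpose_eq hΔ hsymm
  choose s hs hsD using fun k =>
    Complex.exists_mem_unitary_mul_self_eq (diagonal_mem_unitaryGroup_iff.mp hD k)
  refine ⟨diagonal s * Qᵀ, mul_mem (diagonal_mem_unitaryGroup_iff.mpr hs)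
    (transpose_mem_unitaryGroup_iff.mpr hQ), ?_⟩
  rw [transpose_mul, transpose_transpose, diagonal_transpose, Matrix.mul_assoc,
    ← Matrix.mul_assoc (diagonal s), diagonal_mul_diagonal, ← Matrix.mul_assoc]
  simp only [hsD]

lemma fromBlocks_zero_transpose_mul_self [Fintype m] [Fintype n] {α : Type*}
    [CommSemiring α] (A : Matrix m m α) (D : Matrix n n α) :
    (fromBlocks A 0 0 D)ᵀ * fromBlocks A 0 0 D = fromBlocks (Aᵀ * A) 0 0 (Dᵀ * D) := by
  simp [fromBlocks_transpose, fromBlocks_multiply]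

lemma fromBlocks_zero_mem_unitaryGroup [Fintype m] [DecidableEq m] [Fintype n]
    [DecidableEq n] {α : Type*} [CommRing α] [StarRing α] {A : Matrix m m α} {D : Matrix n n α}
    (hA : A ∈ unitaryGroup m α) (hD : D ∈ unitaryGroup n α) :
    fromBlocks A 0 0 D ∈ unitaryGroup (m ⊕ n) α := by
  rw [mem_unitaryGroup_iff', star_eq_conjTranspose, fromBlocks_conjTranspose,
    fromBlocks_multiply]
  simp only [← star_eq_conjTranspose, mem_unitaryGroup_iff'.mp hA, mem_unitaryGroup_iff'.mp hD,
    conjTranspose_zero, Matrix.mul_zero, Matrix.zero_mul, add_zero, zero_add, fromBlocks_one]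

lemma map_conj_transpose_mul_self (A : Matrix m n ℂ) [Fintype m] :
    (A.map (starRingEnd ℂ))ᵀ * A.map (starRingEnd ℂ) = (Aᵀ * A).map (starRingEnd ℂ) := by
  rw [← transpose_map, Matrix.map_mul]

lemma transpose_mul_self_eq_map_conj_of_im_eq_zero [Fintype n] [DecidableEq n]
    {Δ₁ Δ₂ : Matrix n n ℂ} (hΔ₁ : Δ₁ ∈ unitaryGroup n ℂ) (hΔ₂ : Δ₂ ∈ unitaryGroup n ℂ)
    (hreal : ∀ i j, ((Δ₁ * Δ₂ᵀ) i j).im = 0) :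
    Δ₂ᵀ * Δ₂ = (Δ₁ᵀ * Δ₁).map (starRingEnd ℂ) := by
  set R := Δ₁ * Δ₂ᵀ
  have hR : R * Rᵀ = 1 := by
    have hRstar : star R = Rᵀ := ext fun i j => Complex.conj_eq_iff_im.mpr (hreal j i)
    rw [← hRstar, ← mem_unitaryGroup_iff]
    exact mul_mem hΔ₁ (transpose_mem_unitaryGroup_iff.mpr hΔ₂)
  have hΔ₂t : Δ₂ᵀ = star Δ₁ * R := by
    rw [← Matrix.mul_assoc, mem_unitaryGroup_iff'.mp hΔ₁, Matrix.one_mul]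
  calc Δ₂ᵀ * Δ₂ = star Δ₁ * (R * Rᵀ) * (star Δ₁)ᵀ := by
        rw [← transpose_transpose Δ₂, transpose_transpose Δ₂ᵀ, hΔ₂t, transpose_mul]
        simp only [Matrix.mul_assoc]
    _ = (Δ₁ᵀ * Δ₁).map (starRingEnd ℂ) := by
        rw [hR, Matrix.mul_one, Matrix.map_mul]; rfl

lemma exists_orthogonal_mul_fromBlocks_map_conj_of_transpose_mul_self_eq [Fintype n]
    [DecidableEq n] {U : Matrix (n ⊕ n) (n ⊕ n) ℂ} (hU : U ∈ unitaryGroup (n ⊕ n) ℂ)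
    {Δ : Matrix n n ℂ} (hΔ : Δ ∈ unitaryGroup n ℂ)
    (hUU : Uᵀ * U = fromBlocks Δ 0 0 (Δ.map (starRingEnd ℂ))) :
    ∃ W ∈ orthogonalGroup (n ⊕ n) ℝ, ∃ V ∈ unitaryGroup n ℂ,
      U = W.map (fun x : ℝ => (x : ℂ)) * fromBlocks V 0 0 (V.map (starRingEnd ℂ)) := by
  have hsymm : Δᵀ = Δ := by
    have h := congrArg transpose hUU
    rw [transpose_mul, transpose_transpose, hUU, fromBlocks_transpose] at h
    exact (fromBlocks_inj.mp h).1.symm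
  obtain ⟨V, hV, rfl⟩ := exists_mem_unitaryGroup_transpose_mul_self_eq hΔ hsymm
  obtain ⟨W, hW, hUW⟩ := exists_orthogonal_mul_of_transpose_mul_self_eq hU
    (fromBlocks_zero_mem_unitaryGroup (D := V.map (starRingEnd ℂ)) hV
      (map_star_mem_unitaryGroup_iff.mpr hV))
    (by rw [hUU, fromBlocks_zero_transpose_mul_self, map_conj_transpose_mul_self])
  exact ⟨W, hW, V, hV, hUW⟩

lemma im_mul_transpose_map_conj_apply_eq_zero [Fintype n] [DecidableEq n] {Δ : Matrix n n ℂ}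
    (hΔ : Δ ∈ unitaryGroup n ℂ) (i j : n) :
    ((Δ * (Δ.map (starRingEnd ℂ))ᵀ) i j).im = 0 := by
  rw [show Δ * (Δ.map (starRingEnd ℂ))ᵀ = 1 from mem_unitaryGroup_iff.mp hΔ, one_apply]
  split_ifs <;> simp

end Matrix

/-- For a unitary `U ∈ U(2d,ℂ)`, the following are equivalent:
(i) `U = W · diag(Δ, conj Δ)` with `W` orthogonal and `Δ` unitary;
(ii) `U = W · diag(Δ₁, Δ₂)` with `W` orthogonal, `Δ₁, Δ₂` unitary and `Δ₁Δ₂ᵀ` real;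
(iii) `UᵀU = diag(Δ, conj Δ)` for some unitary `Δ`. -/
theorem conj_block_diagonal_characterization (d : ℕ)
    (U : Matrix (Fin d ⊕ Fin d) (Fin d ⊕ Fin d) ℂ)
    (hU : U ∈ Matrix.unitaryGroup (Fin d ⊕ Fin d) ℂ) :
    ((∃ (W : Matrix (Fin d ⊕ Fin d) (Fin d ⊕ Fin d) ℝ) (Δ : Matrix (Fin d) (Fin d) ℂ),
        W ∈ Matrix.orthogonalGroup (Fin d ⊕ Fin d) ℝ ∧ Δ ∈ Matrix.unitaryGroup (Fin d) ℂ ∧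
        U = W.map (fun x : ℝ => (x : ℂ)) * fromBlocks Δ 0 0 (Δ.map (starRingEnd ℂ))) ↔
      (∃ Δ : Matrix (Fin d) (Fin d) ℂ, Δ ∈ Matrix.unitaryGroup (Fin d) ℂ ∧
        Uᵀ * U = fromBlocks Δ 0 0 (Δ.map (starRingEnd ℂ)))) ∧
    ((∃ (W : Matrix (Fin d ⊕ Fin d) (Fin d ⊕ Fin d) ℝ) (Δ₁ Δ₂ : Matrix (Fin d) (Fin d) ℂ),
        W ∈ Matrix.orthogonalGroup (Fin d ⊕ Fin d) ℝ ∧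
        Δ₁ ∈ Matrix.unitaryGroup (Fin d) ℂ ∧ Δ₂ ∈ Matrix.unitaryGroup (Fin d) ℂ ∧
        (∀ i j, ((Δ₁ * Δ₂ᵀ) i j).im = 0) ∧
        U = W.map (fun x : ℝ => (x : ℂ)) * fromBlocks Δ₁ 0 0 Δ₂) ↔
      (∃ Δ : Matrix (Fin d) (Fin d) ℂ, Δ ∈ Matrix.unitaryGroup (Fin d) ℂ ∧
        Uᵀ * U = fromBlocks Δ 0 0 (Δ.map (starRingEnd ℂ)))) := by
  have transpose_mul_self_eq : ∀ W ∈ orthogonalGroup (Fin d ⊕ Fin d) ℝ, ∀ Δ₁ Δ₂,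
      U = W.map (fun x : ℝ => (x : ℂ)) * fromBlocks Δ₁ 0 0 Δ₂ →
      Uᵀ * U = fromBlocks (Δ₁ᵀ * Δ₁) 0 0 (Δ₂ᵀ * Δ₂) := by
    rintro W hW Δ₁ Δ₂ rfl
    rw [transpose_mul_self_map_ofReal_mul hW, fromBlocks_zero_transpose_mul_self]
  refine ⟨⟨?i_to_iii, ?iii_to_i⟩, ⟨?ii_to_iii, ?iii_to_ii⟩⟩
  case i_to_iii =>
    rintro ⟨W, Δ, hW, hΔ, hUW⟩
    refine ⟨Δᵀ * Δ, mul_mem (transpose_mem_unitaryGroup_iff.mpr hΔ) hΔ, ?_⟩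
    rw [transpose_mul_self_eq W hW _ _ hUW, map_conj_transpose_mul_self]
  case ii_to_iii =>
    rintro ⟨W, Δ₁, Δ₂, hW, hΔ₁, hΔ₂, hreal, hUW⟩
    refine ⟨Δ₁ᵀ * Δ₁, mul_mem (transpose_mem_unitaryGroup_iff.mpr hΔ₁) hΔ₁, ?_⟩
    rw [transpose_mul_self_eq W hW _ _ hUW,
      transpose_mul_self_eq_map_conj_of_im_eq_zero hΔ₁ hΔ₂ hreal]
  case iii_to_i =>
    rintro ⟨Δ, hΔ, hUU⟩
    obtain ⟨W, hW, V, hV, hUW⟩ :=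
      exists_orthogonal_mul_fromBlocks_map_conj_of_transpose_mul_self_eq hU hΔ hUU
    exact ⟨W, V, hW, hV, hUW⟩
  case iii_to_ii =>
    rintro ⟨Δ, hΔ, hUU⟩
    obtain ⟨W, hW, V, hV, hUW⟩ :=
      exists_orthogonal_mul_fromBlocks_map_conj_of_transpose_mul_self_eq hU hΔ hUU
    exact ⟨W, V, V.map (starRingEnd ℂ), hW, hV, map_star_mem_unitaryGroup_iff.mpr hV,
      im_mul_transpose_map_conj_apply_eq_zero hV, hUW⟩
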